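/- (Weighted Johnson bound) Let q ≥ 2 and n ≥ 1 be integers, let 0 ≤ β ≤ 1, and let C ⊆ (Fin n → Fin q) be a code such that every two distinct codewords h₁, h₂ ∈ C satisfy Δ(h₁, h₂) ≥ (1 − 1/q)·(1 − β). Let w : Fin n → Fin q → ℝ be nonnegative weights, and for each i set W_i = Σ_{j} w i j and W_i^{(2)} = Σ_{j} (w i j)², assuming W_i > 0 for every i. Then the number of codewords h ∈ C satisfying (1/n)·Σ_i (w i (h i))/W_i > 1/q + sqrt( (1 − 1/q) · ( (1/n)·Σ_i ( W_i^{(2)}/W_i² − 1/q ) ) · β ) is at most (q − 1)·n + 1. -/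

import Mathlib

open scoped RealInnerProductSpace
open Finset Module

/-!
Send a word `h` to the centred one-hot matrix `X h = (𝟙[h i = j] - 1/q)` and the weights to
`Y = (w i j / W i - 1/q)`; all of them lie in the `n(q-1)`-dimensional space of real `n × q`
matrices with zero row sums. With `α = 1 - 1/q` we have `⟪X h, X h'⟫ = nα - hammingDist h h'`, which
is at most `nαβ` for distinct codewords, while each codeword counted has
`⟪X h, Y⟫ > √(nαβ ‖Y‖²)`. Subtracting a suitable common multiple of `Y` therefore makes the `X h`
pairwise obtuse, and a pairwise obtuse family in a `d`-dimensional space has at most `d + 1`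
members.
-/

noncomputable def fracDist {n q : ℕ} (f g : Fin n → Fin q) : ℝ :=
  (hammingDist f g : ℝ) / n

section PairwiseObtuse

variable {E ι : Type*} [NormedAddCommGroup E] [InnerProductSpace ℝ E]

theorem coeff_nonpos_of_sum_smul_eq_zero {s : Finset ι} {v : ι → E} {x₀ : E}
    (h₀ : ∀ i ∈ s, ⟪x₀, v i⟫ < 0) (hv : ∀ i ∈ s, ∀ j ∈ s, i ≠ j → ⟪v i, v j⟫ < 0)
    {f : ι → ℝ} (hf : ∑ i ∈ s, f i • v i = 0) : ∀ i ∈ s, f i ≤ 0 := by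
  set P := s.filter (0 < f ·)
  set u := ∑ i ∈ P, f i • v i
  have hu : u = ∑ j ∈ s.filter (¬ 0 < f ·), (-f j) • v j := by
    rw [← sum_filter_add_sum_filter_not s (0 < f ·)] at hf
    simp only [neg_smul, sum_neg_distrib]
    exact eq_neg_of_add_eq_zero_left hf
  -- `u` is the positive part of the relation and also minus its negative part, so `‖u‖² ≤ 0`
  have hu0 : u = 0 := by
    refine real_inner_self_nonpos.1 ?_
    conv_lhs => arg 2; rw [hu]
    simp only [u, sum_inner, inner_sum, real_inner_smul_left, real_inner_smul_right]
    refine sum_nonpos fun i hi => sum_nonpos fun j hj => ?_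
    rw [mem_filter] at hi hj
    have hij : i ≠ j := by rintro rfl; exact hj.2 hi.2
    have hfj : 0 ≤ -f j := neg_nonneg.2 (not_lt.1 hj.2)
    exact mul_nonpos_of_nonneg_of_nonpos hi.2.le
      (mul_nonpos_of_nonneg_of_nonpos hfj (hv j hj.1 i hi.1 hij.symm).le)
  intro i hi
  by_contra hfi
  have hiP : i ∈ P := mem_filter.2 ⟨hi, not_le.1 hfi⟩
  have hterm : ∀ k ∈ P, f k * ⟪x₀, v k⟫ < 0 := fun k hk =>
    mul_neg_of_pos_of_neg (mem_filter.1 hk).2 (h₀ k (mem_filter.1 hk).1)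
  have hsum : ∑ k ∈ P, f k * ⟪x₀, v k⟫ = 0 := by
    rw [← inner_zero_right x₀, ← hu0]
    simp only [u, inner_sum, real_inner_smul_right]
  exact (hterm i hiP).ne ((sum_eq_zero_iff_of_nonpos fun k hk => (hterm k hk).le).1 hsum i hiP)

theorem linearIndepOn_of_pairwise_inner_neg {s : Finset ι} {v : ι → E} {x₀ : E}
    (h₀ : ∀ i ∈ s, ⟪x₀, v i⟫ < 0) (hv : ∀ i ∈ s, ∀ j ∈ s, i ≠ j → ⟪v i, v j⟫ < 0) :
    LinearIndepOn ℝ v (s : Set ι) := by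
  refine linearIndepOn_finset_iff.2 fun f hf i hi => le_antisymm
    (coeff_nonpos_of_sum_smul_eq_zero h₀ hv hf i hi) ?_
  have hf' : ∑ i ∈ s, (-f) i • v i = 0 := by simp [neg_smul, sum_neg_distrib, hf]
  simpa using coeff_nonpos_of_sum_smul_eq_zero h₀ hv hf' i hi

theorem card_le_finrank_add_one_of_pairwise_inner_neg {s : Finset ι} {v : ι → E}
    (W : Submodule ℝ E) [FiniteDimensional ℝ W] (hvW : ∀ i ∈ s, v i ∈ W)
    (hv : ∀ i ∈ s, ∀ j ∈ s, i ≠ j → ⟪v i, v j⟫ < 0) :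
    s.card ≤ finrank ℝ W + 1 := by
  classical
  obtain rfl | ⟨i₀, hi₀⟩ := s.eq_empty_or_nonempty
  · simp
  have hind : LinearIndependent ℝ fun i : s.erase i₀ => v i :=
    linearIndepOn_of_pairwise_inner_neg (x₀ := v i₀)
      (fun i hi => hv i₀ hi₀ i (mem_of_mem_erase hi) (ne_of_mem_erase hi).symm)
      (fun i hi j hj => hv i (mem_of_mem_erase hi) j (mem_of_mem_erase hj))
  have hspan : Submodule.span ℝ (Set.range fun i : s.erase i₀ => v i) ≤ W :=
    Submodule.span_le.2 <| Set.range_subset_iff.2 fun i => hvW i (mem_of_mem_erase i.2)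
  have := Submodule.finrank_mono hspan
  rw [finrank_span_eq_card hind, Fintype.card_coe] at this
  rw [← card_erase_add_one hi₀]
  omega

theorem card_le_finrank_add_one_of_inner_le {s : Finset ι} {v : ι → E}
    (W : Submodule ℝ E) [FiniteDimensional ℝ W] (hvW : ∀ i ∈ s, v i ∈ W) {y : E} (hyW : y ∈ W)
    {A : ℝ} (hA : ∀ i ∈ s, ∀ j ∈ s, i ≠ j → ⟪v i, v j⟫ ≤ A)
    (hy : ∀ i ∈ s, √(A * ‖y‖ ^ 2) < ⟪v i, y⟫) :
    s.card ≤ finrank ℝ W + 1 := by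
  obtain rfl | hs := s.eq_empty_or_nonempty
  · simp
  obtain ⟨i₀, hi₀, hmin⟩ := s.exists_min_image (fun i => ⟪v i, y⟫) hs
  set T := ⟪v i₀, y⟫
  have hT : 0 < T := (Real.sqrt_nonneg _).trans_lt (hy i₀ hi₀)
  have hAT : A * ‖y‖ ^ 2 < T ^ 2 := (Real.sqrt_lt' hT).1 (hy i₀ hi₀)
  have hy0 : 0 < ‖y‖ ^ 2 := by
    refine pow_pos (norm_pos_iff.2 ?_) 2
    rintro rfl
    simp [T] at hT
  -- `T` is the least `⟪v i, y⟫`; this `c` minimises the bound `A - 2cT + c²‖y‖²` on the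
  -- pairwise inner products of the `v i - c • y`, making it `A - T²/‖y‖² < 0`
  set c := T / ‖y‖ ^ 2
  have hcy : c * ‖y‖ ^ 2 = T := div_mul_cancel₀ T hy0.ne'
  have hAc : A < c * T := by
    rwa [div_mul_eq_mul_div, lt_div_iff₀ hy0, ← sq]
  refine card_le_finrank_add_one_of_pairwise_inner_neg W (v := fun i => v i - c • y)
    (fun i hi => W.sub_mem (hvW i hi) (W.smul_mem c hyW)) fun i hi j hj hij => ?_
  have hexpand : ⟪v i - c • y, v j - c • y⟫
      = ⟪v i, v j⟫ - c * ⟪v i, y⟫ - c * ⟪v j, y⟫ + c * (c * ‖y‖ ^ 2) := by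
    simp only [inner_sub_left, inner_sub_right, real_inner_smul_left, real_inner_smul_right]
    rw [real_inner_self_eq_norm_sq, real_inner_comm y, real_inner_comm y]
    ring
  have hc : 0 ≤ c := by positivity
  rw [hexpand, hcy]
  linarith [hA i hi j hj hij, mul_le_mul_of_nonneg_left (hmin i hi) hc,
    mul_le_mul_of_nonneg_left (hmin j hj) hc]

end PairwiseObtuse

section Johnson

variable (n q : ℕ)

noncomputable def rowSum : EuclideanSpace ℝ (Fin n × Fin q) →ₗ[ℝ] (Fin n → ℝ) where
  toFun v i := ∑ j, v (i, j)
  map_add' u v := by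
    ext i
    exact sum_add_distrib
  map_smul' c v := by
    ext i
    simp [mul_sum]

theorem finrank_ker_rowSum (hq : 0 < q) :
    finrank ℝ (LinearMap.ker (rowSum n q)) = n * (q - 1) := by
  have hq0 : (q : ℝ) ≠ 0 := by positivity
  have hsurj : Function.Surjective (rowSum n q) := fun u =>
    ⟨WithLp.toLp 2 fun ij => u ij.1 / q, funext fun i => by simp [rowSum]; field_simp⟩
  have := (rowSum n q).finrank_range_add_finrank_ker
  rw [LinearMap.range_eq_top.2 hsurj, finrank_top, finrank_fintype_fun_eq_card,
    finrank_euclideanSpace, Fintype.card_prod, Fintype.card_fin, Fintype.card_fin] at this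
  have hq1 : n * (q - 1) + n = n * q := by
    rw [← Nat.mul_succ, Nat.succ_eq_add_one, Nat.sub_add_cancel hq]
  omega

variable {n q}

noncomputable def rowCentered (p : Fin n → Fin q → ℝ) : EuclideanSpace ℝ (Fin n × Fin q) :=
  WithLp.toLp 2 fun ij => p ij.1 ij.2 - 1 / q

theorem rowCentered_mem_ker_rowSum (hq : (q : ℝ) ≠ 0) {p : Fin n → Fin q → ℝ}
    (hp : ∀ i, ∑ j, p i j = 1) : rowCentered p ∈ LinearMap.ker (rowSum n q) := by
  ext i
  simp [rowSum, rowCentered, sum_sub_distrib, hp, hq]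

theorem inner_rowCentered (hq : (q : ℝ) ≠ 0) {p p' : Fin n → Fin q → ℝ}
    (hp : ∀ i, ∑ j, p i j = 1) (hp' : ∀ i, ∑ j, p' i j = 1) :
    ⟪rowCentered p, rowCentered p'⟫ = ∑ i, (∑ j, p i j * p' i j - 1 / q) := by
  simp only [rowCentered, PiLp.inner_apply, RCLike.inner_apply, conj_trivial,
    Fintype.sum_prod_type]
  refine sum_congr rfl fun i _ => ?_
  simp only [sub_mul, mul_sub, sum_sub_distrib, ← sum_mul, ← mul_sum, hp, hp', sum_const,
    card_univ, Fintype.card_fin, nsmul_eq_mul]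
  simp only [mul_comm (p' i _)]
  field_simp
  ring

def oneHot (h : Fin n → Fin q) (i : Fin n) (j : Fin q) : ℝ :=
  if h i = j then 1 else 0

theorem sum_oneHot (h : Fin n → Fin q) (i : Fin n) : ∑ j, oneHot h i j = 1 := by
  simp [oneHot]

theorem sum_oneHot_mul (h : Fin n → Fin q) (p : Fin n → Fin q → ℝ) (i : Fin n) :
    ∑ j, oneHot h i j * p i j = p i (h i) := by
  simp [oneHot]

noncomputable def normalizeRows (w : Fin n → Fin q → ℝ) (i : Fin n) (j : Fin q) : ℝ :=
  w i j / ∑ j', w i j'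

theorem sum_normalizeRows {w : Fin n → Fin q → ℝ} {i : Fin n} (hw : ∑ j, w i j ≠ 0) :
    ∑ j, normalizeRows w i j = 1 := by
  simp only [normalizeRows, ← sum_div, div_self hw]

theorem inner_rowCentered_oneHot (hq : (q : ℝ) ≠ 0) (h h' : Fin n → Fin q) :
    ⟪rowCentered (oneHot h), rowCentered (oneHot h')⟫ = n - hammingDist h h' - n / q := by
  rw [inner_rowCentered hq (sum_oneHot h) (sum_oneHot h')]
  have hcard : #{i | h i = h' i} + hammingDist h h' = n := by
    simpa [hammingDist] using card_filter_add_card_filter_not (s := univ) fun i => h i = h' i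
  simp only [sum_oneHot_mul]
  simp only [oneHot, sum_sub_distrib, eq_comm (a := h' _), sum_boole, sum_const, card_univ,
    Fintype.card_fin, nsmul_eq_mul, ← hcard]
  push_cast
  ring

theorem inner_rowCentered_oneHot_le (hq : (q : ℝ) ≠ 0) (hn : (0 : ℝ) < n) {β : ℝ}
    {h h' : Fin n → Fin q} (hd : (1 - 1 / (q : ℝ)) * (1 - β) ≤ fracDist h h') :
    ⟪rowCentered (oneHot h), rowCentered (oneHot h')⟫ ≤ n * (1 - 1 / q) * β := by
  rw [fracDist, le_div_iff₀ hn] at hd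
  rw [inner_rowCentered_oneHot hq]
  linear_combination hd

theorem inner_rowCentered_oneHot_normalizeRows (hq : (q : ℝ) ≠ 0) {w : Fin n → Fin q → ℝ}
    (hw : ∀ i, ∑ j, w i j ≠ 0) (h : Fin n → Fin q) :
    ⟪rowCentered (oneHot h), rowCentered (normalizeRows w)⟫
      = ∑ i, w i (h i) / ∑ j, w i j - n / q := by
  rw [inner_rowCentered hq (sum_oneHot h) fun i => sum_normalizeRows (hw i)]
  simp only [sum_oneHot_mul]
  simp [normalizeRows, sum_sub_distrib, div_eq_mul_inv]

theorem norm_rowCentered_normalizeRows_sq (hq : (q : ℝ) ≠ 0) {w : Fin n → Fin q → ℝ}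
    (hw : ∀ i, ∑ j, w i j ≠ 0) :
    ‖rowCentered (normalizeRows w)‖ ^ 2
      = ∑ i, ((∑ j, w i j ^ 2) / (∑ j, w i j) ^ 2 - 1 / q) := by
  rw [← real_inner_self_eq_norm_sq,
    inner_rowCentered hq (fun i => sum_normalizeRows (hw i)) fun i => sum_normalizeRows (hw i)]
  simp only [normalizeRows, div_mul_div_comm, ← sum_div, sq]

end Johnson

theorem sqrt_mul_lt_sub_of_lt {N M R a b c : ℝ} (hN : 0 < N)
    (h : c + √(a * (1 / N * R) * b) < 1 / N * M) : √(N * a * b * R) < M - N * c := by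
  have hR : N * a * b * R = N ^ 2 * (a * (1 / N * R) * b) := by
    field_simp
  have hM : N * (1 / N * M) = M := by
    field_simp
  rw [hR, Real.sqrt_mul (sq_nonneg _), Real.sqrt_sq hN.le]
  have key := mul_lt_mul_of_pos_left h hN
  rw [hM, mul_add] at key
  linarith

theorem weighted_johnson_bound_general (q n : ℕ) (hq : 2 ≤ q) (hn : 1 ≤ n)
    (β : ℝ)
    (C : Set (Fin n → Fin q))
    (hdist : ∀ h₁ ∈ C, ∀ h₂ ∈ C, h₁ ≠ h₂ →
      (1 - 1 / (q : ℝ)) * (1 - β) ≤ fracDist h₁ h₂)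
    (w : Fin n → Fin q → ℝ)
    (hWpos : ∀ i, 0 < ∑ j, w i j) :
    Set.ncard {h | h ∈ C ∧
        (1 / (n : ℝ)) * ∑ i, w i (h i) / (∑ j, w i j) >
          1 / (q : ℝ) + Real.sqrt ((1 - 1 / (q : ℝ)) *
            ((1 / (n : ℝ)) * ∑ i, ((∑ j, (w i j) ^ 2) / (∑ j, w i j) ^ 2 - 1 / (q : ℝ))) * β)}
      ≤ (q - 1) * n + 1 := by
  classical
  have hq0 : (q : ℝ) ≠ 0 := by positivity
  have hn0 : (0 : ℝ) < n := by positivity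
  have hW i : ∑ j, w i j ≠ 0 := (hWpos i).ne'
  rw [Set.ncard_eq_toFinset_card', mul_comm (q - 1), ← finrank_ker_rowSum n q (by omega)]
  refine card_le_finrank_add_one_of_inner_le _ (y := rowCentered (normalizeRows w))
    (A := n * (1 - 1 / q) * β) (fun h _ => rowCentered_mem_ker_rowSum hq0 (sum_oneHot h))
    (rowCentered_mem_ker_rowSum hq0 fun i => sum_normalizeRows (hW i)) ?_ ?_
  · intro h hh h' hh' hne
    rw [Set.mem_toFinset] at hh hh'
    exact inner_rowCentered_oneHot_le hq0 hn0 (hdist h hh.1 h' hh'.1 hne)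
  · intro h hh
    rw [Set.mem_toFinset] at hh
    rw [norm_rowCentered_normalizeRows_sq hq0 hW, inner_rowCentered_oneHot_normalizeRows hq0 hW,
      div_eq_mul_one_div (n : ℝ)]
    exact sqrt_mul_lt_sub_of_lt hn0 hh.2

/-- **Weighted Johnson bound.** If a code `C ⊆ [q]^n` has minimum fractional distance at
least `(1 - 1/q)(1 - β)`, then for any nonnegative weights `w i j` (with positive row sums
`W i = Σ_j w i j` and `W² i = Σ_j (w i j)²`), the number of codewords `h` with
`𝔼_i [w i (h i) / W i] > 1/q + sqrt((1 - 1/q) · 𝔼_i [W² i / (W i)² - 1/q] · β)` is at most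
`(q-1)·n + 1`. -/
theorem weighted_johnson_bound (q n : ℕ) (hq : 2 ≤ q) (hn : 1 ≤ n)
    (β : ℝ) (hβ0 : 0 ≤ β) (hβ1 : β ≤ 1)
    (C : Set (Fin n → Fin q))
    (hdist : ∀ h₁ ∈ C, ∀ h₂ ∈ C, h₁ ≠ h₂ →
      (1 - 1 / (q : ℝ)) * (1 - β) ≤ fracDist h₁ h₂)
    (w : Fin n → Fin q → ℝ) (hw : ∀ i j, 0 ≤ w i j)
    (hWpos : ∀ i, 0 < ∑ j, w i j) :
    Set.ncard {h | h ∈ C ∧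
        (1 / (n : ℝ)) * ∑ i, w i (h i) / (∑ j, w i j) >
          1 / (q : ℝ) + Real.sqrt ((1 - 1 / (q : ℝ)) *
            ((1 / (n : ℝ)) * ∑ i, ((∑ j, (w i j) ^ 2) / (∑ j, w i j) ^ 2 - 1 / (q : ℝ))) * β)}
      ≤ (q - 1) * n + 1 :=
  weighted_johnson_bound_general q n hq hn β C hdist w hWpos
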